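/- For every nonnegative integer n, the number of odd coefficients of the polynomial (1+x+x^2+x^3)^n equals 2^{s₂(3n)}. Equivalently, the number of nonzero coefficients of (1+X+X^2+X^3)^n over the field with two elements equals 2^{s₂(3n)}. -/
import Mathlib
open Polynomial

lemma support_expand2 (g : Polynomial (ZMod 2)) :
    (expand (ZMod 2) 2 g).support = g.support.image (fun k => 2 * k) := by
  ext k
  simp only [mem_support_iff, Finset.mem_image, coeff_expand (by norm_num : 0 < 2)]
  constructor
  · intro h
    split_ifs at h with hd
    · obtain ⟨j, rfl⟩ := hd
      exact ⟨j, by simpa using h, rfl⟩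
    · exact absurd rfl h
  · rintro ⟨j, hj, rfl⟩
    rw [if_pos ⟨j, rfl⟩]
    simpa using hj

lemma coeff_expand_mul_even (g : Polynomial (ZMod 2)) (j : ℕ) :
    (expand (ZMod 2) 2 g * (1 + X)).coeff (2 * j) = g.coeff j := by
  rw [mul_add, mul_one, coeff_add, coeff_expand_mul' (by norm_num : 0 < 2)]
  rcases Nat.eq_zero_or_pos j with rfl | hj
  · simp
  · have h : 2 * j = (2 * j - 1) + 1 := by omega
    rw [h, coeff_mul_X, coeff_expand (by norm_num : 0 < 2),
      if_neg (by omega), add_zero]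

lemma coeff_expand_mul_odd (g : Polynomial (ZMod 2)) (j : ℕ) :
    (expand (ZMod 2) 2 g * (1 + X)).coeff (2 * j + 1) = g.coeff j := by
  rw [mul_add, mul_one, coeff_add, coeff_mul_X, coeff_expand_mul' (by norm_num : 0 < 2),
    coeff_expand (by norm_num : 0 < 2), if_neg (by omega), zero_add]

lemma card_expand_mul (g : Polynomial (ZMod 2)) :
    (expand (ZMod 2) 2 g * (1 + X)).support.card = 2 * g.support.card := by
  have hsupp : (expand (ZMod 2) 2 g * (1 + X)).support
      = g.support.image (fun k => 2 * k) ∪ g.support.image (fun k => 2 * k + 1) := by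
    ext k
    simp only [mem_support_iff, Finset.mem_union, Finset.mem_image]
    rcases Nat.even_or_odd k with ⟨j, hj⟩ | ⟨j, hj⟩
    · rw [show k = 2 * j by omega, coeff_expand_mul_even]
      constructor
      · intro h; exact Or.inl ⟨j, h, rfl⟩
      · rintro (⟨i, hi, h⟩ | ⟨i, hi, h⟩)
        · obtain rfl : i = j := by omega
          exact hi
        · omega
    · rw [show k = 2 * j + 1 by omega, coeff_expand_mul_odd]
      constructor
      · intro h; exact Or.inr ⟨j, h, rfl⟩
      · rintro (⟨i, hi, h⟩ | ⟨i, hi, h⟩)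
        · omega
        · obtain rfl : i = j := by omega
          exact hi
  rw [hsupp, Finset.card_union_of_disjoint, Finset.card_image_of_injective _ (fun a b => by omega),
    Finset.card_image_of_injective _ (fun a b => by omega), two_mul]
  rw [Finset.disjoint_left]
  intro a ha hb
  simp only [Finset.mem_image] at ha hb
  obtain ⟨i, -, rfl⟩ := ha
  obtain ⟨j, -, hj⟩ := hb
  omega

lemma sq_one_add_X : (1 + X : Polynomial (ZMod 2)) ^ 2 = expand (ZMod 2) 2 (1 + X) := by
  have h2 : (2 : Polynomial (ZMod 2)) = 0 := by
    exact_mod_cast CharP.cast_eq_zero (Polynomial (ZMod 2)) 2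
  simp only [map_add, map_one, expand_X]
  ring_nf
  rw [show (1 + X * 2 + X ^ 2 : Polynomial (ZMod 2)) = 1 + X^2 + X * 2 by ring, h2]
  ring

lemma binom_card : ∀ m : ℕ, ((1 + X : Polynomial (ZMod 2)) ^ m).support.card
    = 2 ^ (Nat.digits 2 m).sum := by
  intro m
  induction m using Nat.strong_induction_on with
  | _ m ih =>
    rcases Nat.eq_zero_or_pos m with rfl | hm
    · rw [pow_zero, ← C_1, support_C one_ne_zero]
      simp
    have hdig : Nat.digits 2 m = m % 2 :: Nat.digits 2 (m / 2) :=
      Nat.digits_def' (by norm_num) hm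
    have key : (1 + X : Polynomial (ZMod 2)) ^ (2 * (m / 2))
        = expand (ZMod 2) 2 ((1 + X) ^ (m / 2)) := by
      rw [pow_mul, sq_one_add_X, ← map_pow]
    have ihq := ih (m / 2) (by omega)
    rcases Nat.even_or_odd m with ⟨j, hj⟩ | hodd
    · have hm2 : m = 2 * (m / 2) := by omega
      rw [hdig, List.sum_cons, show m % 2 = 0 by omega, Nat.zero_add]
      conv_lhs => rw [hm2, key]
      rw [support_expand2,
        Finset.card_image_of_injective _ (fun a b => by omega), ihq]
    · have hm2 : m = 2 * (m / 2) + 1 := by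
        rcases hodd with ⟨j, hj⟩; omega
      rw [hdig, List.sum_cons, show m % 2 = 1 by omega]
      conv_lhs => rw [hm2, pow_succ, key]
      rw [card_expand_mul, ihq, pow_add, pow_one]

theorem quadrinomial_odd_coeff_count (n : ℕ) :
    (((1 + X + X ^ 2 + X ^ 3 : Polynomial (ZMod 2)) ^ n).support.card
        = 2 ^ (Nat.digits 2 (3 * n)).sum) ∧
    ((((1 + X + X ^ 2 + X ^ 3 : Polynomial ℤ) ^ n).support.filter
          (fun i => Odd (((1 + X + X ^ 2 + X ^ 3 : Polynomial ℤ) ^ n).coeff i))).card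
        = 2 ^ (Nat.digits 2 (3 * n)).sum) := by
  have hcube : (1 + X + X ^ 2 + X ^ 3 : Polynomial (ZMod 2)) = (1 + X) ^ 3 := by
    have h2 : (2 : Polynomial (ZMod 2)) = 0 := by
      exact_mod_cast CharP.cast_eq_zero (Polynomial (ZMod 2)) 2
    rw [show ((1 + X) ^ 3 : Polynomial (ZMod 2)) = 1 + X + X^2 + X^3 + (X + X^2) * 2 by ring, h2]
    ring
  have h1 : (((1 + X + X ^ 2 + X ^ 3 : Polynomial (ZMod 2)) ^ n).support.card
      = 2 ^ (Nat.digits 2 (3 * n)).sum) := by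
    rw [hcube, ← pow_mul, mul_comm, binom_card]
  refine ⟨h1, ?_⟩
  set p : Polynomial ℤ := (1 + X + X ^ 2 + X ^ 3) ^ n with hp
  have hmap : p.map (Int.castRingHom (ZMod 2))
      = (1 + X + X ^ 2 + X ^ 3 : Polynomial (ZMod 2)) ^ n := by
    simp [hp, Polynomial.map_pow]
  have hsupp : (p.map (Int.castRingHom (ZMod 2))).support
      = p.support.filter (fun i => Odd (p.coeff i)) := by
    ext i
    simp only [mem_support_iff, Finset.mem_filter, coeff_map, eq_intCast]
    constructor
    · intro h
      have hodd : Odd (p.coeff i) := by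
        rw [← Int.not_even_iff_odd, even_iff_two_dvd]
        intro hdvd
        exact h ((ZMod.intCast_zmod_eq_zero_iff_dvd _ 2).mpr (by exact_mod_cast hdvd))
      exact ⟨fun h0 => by simp [h0] at h, hodd⟩
    · rintro ⟨-, hodd⟩ h0
      rw [ZMod.intCast_zmod_eq_zero_iff_dvd] at h0
      rw [← Int.not_even_iff_odd, even_iff_two_dvd] at hodd
      exact hodd (by exact_mod_cast h0)
  rw [← hsupp, hmap, h1]
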